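/- The number a(n,k) of allowable RG-words of length n with maximum letter k satisfies the recurrence a(n,k) = a(n−1,k−1) + ⌈k/2⌉·a(n−1,k) for n ≥ 1 and 1 ≤ k ≤ n, with boundary conditions a(n,0) = δ_{n,0}. -/

import Mathlib

open scoped Classical

/-- The prefix maximum `max(w_1, …, w_{i-1})` (equal to `0` when `i` is the first index). -/
def pmax {n k : ℕ} (w : Fin n → Fin (k + 1)) (i : Fin n) : ℕ :=
  (Finset.univ.filter fun j => j < i).sup fun j => (w j : ℕ)

/-- `w` is a restricted growth word of length `n` with maximum letter `k`. -/
def IsRG {n k : ℕ} (w : Fin n → Fin (k + 1)) : Prop :=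
  (∀ i, 1 ≤ (w i : ℕ)) ∧ (∀ i, (w i : ℕ) ≤ pmax w i + 1) ∧
    (Finset.univ.sup fun i => (w i : ℕ)) = k

/-- An RG-word is allowable if every even letter appears exactly once. -/
def IsAllowable {n k : ℕ} (w : Fin n → Fin (k + 1)) : Prop :=
  ∀ j : ℕ, Even j → (Finset.univ.filter fun i => (w i : ℕ) = j).card ≤ 1

/-- `a(n,k)`, the number of allowable RG-words of length `n` with maximum letter `k`. -/
noncomputable def aCount (n k : ℕ) : ℕ :=
  (Finset.univ.filter fun w : Fin n → Fin (k + 1) => IsRG w ∧ IsAllowable w).card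

/-!
Removing the last letter `c` of an allowable RG-word with maximum `k` leaves an allowable prefix
`p` satisfying the growth condition, whose maximum is `k` or `k - 1`. If it is `k - 1`, then `c` is
the new maximum `k`, which occurs once. If it is `k`, every letter `1, …, k` already occurs in `p`,
so the even letters are excluded and `c` ranges over the `⌈k/2⌉ = (k + 1) / 2` odd letters.
-/

open Finset

def IsRestrictedGrowth {n k : ℕ} (w : Fin n → Fin (k + 1)) : Prop :=
  (∀ i, 1 ≤ (w i : ℕ)) ∧ ∀ i, (w i : ℕ) ≤ pmax w i + 1

def maxLetter {n k : ℕ} (w : Fin n → Fin (k + 1)) : ℕ :=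
  univ.sup fun i => (w i : ℕ)

lemma isRG_iff_isRestrictedGrowth {n k : ℕ} (w : Fin n → Fin (k + 1)) :
    IsRG w ↔ IsRestrictedGrowth w ∧ maxLetter w = k :=
  and_assoc.symm

lemma pmax_eq_sup_Iio {n k : ℕ} (w : Fin n → Fin (k + 1)) (i : Fin n) :
    pmax w i = (Iio i).sup fun j => (w j : ℕ) := by
  rw [pmax, filter_gt_eq_Iio]

lemma val_le_maxLetter {n k : ℕ} (w : Fin n → Fin (k + 1)) (i : Fin n) :
    (w i : ℕ) ≤ maxLetter w :=
  le_sup (f := fun i => (w i : ℕ)) (mem_univ i)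

section Snoc

variable {m k : ℕ} (p : Fin m → Fin (k + 1)) (c : Fin (k + 1))

lemma pmax_snoc_castSucc (t : Fin m) :
    pmax (Fin.snoc p c : Fin (m + 1) → Fin (k + 1)) t.castSucc = pmax p t := by
  simp [pmax_eq_sup_Iio, ← Fin.map_castSuccEmb_Iio, sup_map, Function.comp_def]

lemma pmax_snoc_last :
    pmax (Fin.snoc p c : Fin (m + 1) → Fin (k + 1)) (Fin.last m) = maxLetter p := by
  simp [pmax_eq_sup_Iio, Fin.Iio_last_eq_map, sup_map, maxLetter, Function.comp_def]

lemma maxLetter_snoc :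
    maxLetter (Fin.snoc p c : Fin (m + 1) → Fin (k + 1)) = max (maxLetter p) c := by
  simp [maxLetter, Fin.univ_castSuccEmb, sup_map, max_comm, Function.comp_def]

lemma card_filter_snoc_val_eq (j : ℕ) :
    #{i | ((Fin.snoc p c : Fin (m + 1) → Fin (k + 1)) i : ℕ) = j} =
      #{t | (p t : ℕ) = j} + if (c : ℕ) = j then 1 else 0 := by
  rw [card_filter, card_filter, Fin.sum_univ_castSucc]
  simp

lemma isRestrictedGrowth_snoc_iff :
    IsRestrictedGrowth (Fin.snoc p c : Fin (m + 1) → Fin (k + 1)) ↔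
      IsRestrictedGrowth p ∧ 1 ≤ (c : ℕ) ∧ (c : ℕ) ≤ maxLetter p + 1 := by
  simp only [IsRestrictedGrowth, Fin.forall_fin_succ' (P := fun i => 1 ≤ _),
    Fin.forall_fin_succ' (P := fun i => _ ≤ pmax _ i + 1), pmax_snoc_castSucc, pmax_snoc_last,
    Fin.snoc_castSucc, Fin.snoc_last]
  tauto

lemma isAllowable_snoc_iff :
    IsAllowable (Fin.snoc p c : Fin (m + 1) → Fin (k + 1)) ↔
      IsAllowable p ∧ (Even (c : ℕ) → ∀ t, (p t : ℕ) ≠ c) := by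
  simp only [IsAllowable, card_filter_snoc_val_eq]
  constructor
  · intro h
    refine ⟨fun j hj => (Nat.le_add_right _ _).trans (h j hj), fun hc t ht => ?_⟩
    have hle := h c hc
    have hpos : 0 < #{t | (p t : ℕ) = c} := card_pos.mpr ⟨t, by simp [ht]⟩
    simp only [if_true] at hle
    omega
  · rintro ⟨hp, hc⟩ j hj
    split_ifs with hcj
    · subst hcj
      simp [filter_eq_empty_iff.mpr fun t _ => hc hj t]
    · simpa using hp j hj

end Snoc

lemma IsRestrictedGrowth.exists_eq_of_le_maxLetter {m k : ℕ} {p : Fin m → Fin (k + 1)}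
    (hp : IsRestrictedGrowth p) {j : ℕ} (hj : 1 ≤ j) (hjp : j ≤ maxLetter p) :
    ∃ i, (p i : ℕ) = j := by
  induction m with
  | zero =>
    have : maxLetter p = 0 := by simp [maxLetter]
    omega
  | succ m ih =>
    obtain ⟨p, c, rfl⟩ : ∃ q c, p = Fin.snoc q c :=
      ⟨Fin.init p, p (Fin.last m), (Fin.snoc_init_self p).symm⟩
    obtain ⟨hq, -, hc⟩ := (isRestrictedGrowth_snoc_iff p c).1 hp
    rw [maxLetter_snoc] at hjp
    by_cases hjq : j ≤ maxLetter p
    · obtain ⟨i, hi⟩ := ih hq hjq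
      exact ⟨i.castSucc, by simpa using hi⟩
    · exact ⟨Fin.last m, by simp only [Fin.snoc_last]; omega⟩

lemma isRG_snoc_and_isAllowable_snoc_iff {m k : ℕ} (p : Fin m → Fin (k + 1)) (c : Fin (k + 1)) :
    IsRG (Fin.snoc p c : Fin (m + 1) → Fin (k + 1)) ∧
        IsAllowable (Fin.snoc p c : Fin (m + 1) → Fin (k + 1)) ↔
      IsRestrictedGrowth p ∧ IsAllowable p ∧
        (maxLetter p = k ∧ Odd (c : ℕ) ∨ maxLetter p + 1 = k ∧ (c : ℕ) = k) := by
  rw [isRG_iff_isRestrictedGrowth, isRestrictedGrowth_snoc_iff, isAllowable_snoc_iff,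
    maxLetter_snoc]
  have hck := c.is_le
  constructor
  · rintro ⟨⟨⟨hp, hc, hcp⟩, hmax⟩, hpa, hce⟩
    refine ⟨hp, hpa, ?_⟩
    rcases eq_or_ne (maxLetter p) k with hpk | hpk
    · refine .inl ⟨hpk, Nat.not_even_iff_odd.1 fun he => ?_⟩
      obtain ⟨t, ht⟩ := hp.exists_eq_of_le_maxLetter hc (by omega)
      exact hce he t ht
    · omega
  · rintro ⟨hp, hpa, ⟨hpk, hodd⟩ | ⟨hpk, hc⟩⟩
    · exact ⟨⟨⟨hp, hodd.pos, by omega⟩, by omega⟩, hpa,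
        fun he => absurd hodd (Nat.not_odd_iff_even.2 he)⟩
    · refine ⟨⟨⟨hp, by omega, by omega⟩, by omega⟩, hpa, fun _ t ht => ?_⟩
      have := val_le_maxLetter p t
      omega

lemma card_filter_odd_val (k : ℕ) : #{c : Fin (k + 1) | Odd (c : ℕ)} = (k + 1) / 2 := by
  rw [card_filter, Fin.sum_univ_eq_sum_range (fun c => if Odd c then 1 else 0), ← card_filter,
    ← Nat.card_multiples]
  congr 1
  exact filter_congr fun c _ => by
    rw [← even_iff_two_dvd, Nat.even_add_one, Nat.not_even_iff_odd]

lemma card_filter_snoc_isRG_and_isAllowable {m k : ℕ} (p : Fin m → Fin (k + 1)) :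
    #{c | IsRG (Fin.snoc p c : Fin (m + 1) → Fin (k + 1)) ∧
        IsAllowable (Fin.snoc p c : Fin (m + 1) → Fin (k + 1))} =
      (if IsRG p ∧ IsAllowable p then (k + 1) / 2 else 0) +
        if IsRestrictedGrowth p ∧ IsAllowable p ∧ maxLetter p + 1 = k then 1 else 0 := by
  rw [filter_congr fun c _ => isRG_snoc_and_isAllowable_snoc_iff p c, isRG_iff_isRestrictedGrowth]
  by_cases hk : IsRestrictedGrowth p ∧ IsAllowable p ∧ maxLetter p = k
  · obtain ⟨hp, hpa, hpk⟩ := hk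
    simp [hp, hpa, hpk, card_filter_odd_val]
  by_cases hk' : IsRestrictedGrowth p ∧ IsAllowable p ∧ maxLetter p + 1 = k
  · obtain ⟨hp, hpa, hpk⟩ := hk'
    have hpk' : maxLetter p ≠ k := by omega
    simp only [hp, hpa, hpk, hpk', true_and, false_and, false_or, if_true, if_false, zero_add]
    exact card_eq_one.2 ⟨Fin.last k, by ext; simp [Fin.ext_iff]⟩
  · rw [if_neg (by tauto), if_neg hk', card_eq_zero, filter_eq_empty_iff]
    rintro c - ⟨hp, hpa, ⟨hpk, -⟩ | ⟨hpk, -⟩⟩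
    exacts [hk ⟨hp, hpa, hpk⟩, hk' ⟨hp, hpa, hpk⟩]

lemma card_filter_eq_sum_card_filter_snoc {α : Type*} [Fintype α] {m : ℕ}
    (P : (Fin (m + 1) → α) → Prop) [DecidablePred P] :
    #{w | P w} = ∑ p : Fin m → α, #{c | P (Fin.snoc p c)} := by
  rw [card_filter, ← (Fin.snocEquiv fun _ => α).sum_comp, Fintype.sum_prod_type_right]
  simp only [card_filter]
  rfl

lemma aCount_succ (m k : ℕ) :
    aCount (m + 1) k = (k + 1) / 2 * aCount m k +
      #{p : Fin m → Fin (k + 1) | IsRestrictedGrowth p ∧ IsAllowable p ∧ maxLetter p + 1 = k} := by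
  rw [aCount, card_filter_eq_sum_card_filter_snoc]
  simp only [card_filter_snoc_isRG_and_isAllowable]
  rw [sum_add_distrib, ← sum_filter, ← sum_filter, sum_const, sum_const, smul_eq_mul, smul_eq_mul,
    mul_one, aCount, mul_comm]

lemma isRG_and_isAllowable_iff_castSucc_comp {m l : ℕ} (q : Fin m → Fin (l + 1)) :
    IsRG q ∧ IsAllowable q ↔
      IsRestrictedGrowth (Fin.castSucc ∘ q) ∧ IsAllowable (Fin.castSucc ∘ q) ∧
        maxLetter (Fin.castSucc ∘ q) + 1 = l + 1 := by
  simp only [IsRG, pmax, IsAllowable, IsRestrictedGrowth, Function.comp_apply, Fin.val_castSucc,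
    maxLetter, Nat.add_right_cancel_iff]
  tauto

lemma card_maxLetter_add_one_eq_aCount (m l : ℕ) :
    #{p : Fin m → Fin (l + 2) | IsRestrictedGrowth p ∧ IsAllowable p ∧ maxLetter p + 1 = l + 1} =
      aCount m l := by
  rw [aCount, ← card_image_of_injective _ (Fin.castSucc_injective (l + 1)).comp_left]
  refine congrArg card (ext fun p => ?_)
  simp only [mem_filter, mem_univ, true_and, mem_image]
  constructor
  · intro hp
    have hne : ∀ t, p t ≠ Fin.last (l + 1) := fun t ht => by
      have := val_le_maxLetter p t
      rw [ht, Fin.val_last] at this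
      omega
    have hq : Fin.castSucc ∘ (fun t => (p t).castPred (hne t)) = p := by
      ext t
      simp
    rw [← hq] at hp
    exact ⟨_, (isRG_and_isAllowable_iff_castSucc_comp _).2 hp, hq⟩
  · rintro ⟨q, hq, rfl⟩
    exact (isRG_and_isAllowable_iff_castSucc_comp q).1 hq

lemma aCount_zero_zero : aCount 0 0 = 1 := by
  simp [aCount, IsRG, IsAllowable]

theorem aCount_recurrence :
    (∀ n k : ℕ, 1 ≤ n → 1 ≤ k → k ≤ n →
      aCount n k = aCount (n - 1) (k - 1) + (k + 1) / 2 * aCount (n - 1) k) ∧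
    (∀ n : ℕ, aCount n 0 = if n = 0 then 1 else 0) := by
  refine ⟨fun n k hn hk _ => ?_, fun n => ?_⟩
  · obtain ⟨m, rfl⟩ : ∃ m, n = m + 1 := ⟨n - 1, by omega⟩
    obtain ⟨l, rfl⟩ : ∃ l, k = l + 1 := ⟨k - 1, by omega⟩
    rw [Nat.add_sub_cancel, Nat.add_sub_cancel, aCount_succ, card_maxLetter_add_one_eq_aCount,
      add_comm]
  · cases n with
    | zero => exact aCount_zero_zero
    | succ m => simp [aCount_succ]
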